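/- arXiv:2010.15515 — 2 statements merged into one kernel-verified Lean document; each statement's English description precedes it below -/
import Mathlib

section
/- (Proposition 1, exponential form) Let T be a probability tree with d = Σ_{i=1}^k (κ_i − 1). For every θ ∈ Θ_T and every root-to-leaf path x: p_θ(x) = N_1(θ) · ∏_{i=1}^k ∏_{j=1}^{κ_i−1} (θ_{ij} N_{ij}(θ)/N_i(θ))^{α_{ij}(x)}; equivalently, p_θ(x) = exp( Σ_{i=1}^k Σ_{j=1}^{κ_i−1} η_{ij}(θ) α_{ij}(x) − ψ(θ) ), where η_{ij}(θ) = log(θ_{ij} N_{ij}(θ)/N_i(θ)) and ψ(θ) = −log N_1(θ). Thus T represents an exponential family with sufficient statistic the edge indicators (α_{ij})_{j<κ_i}, natural parameters η_{ij}, and cumulant-generating function ψ. -/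
namespace StagedTrees

/-- A finite directed rooted tree in which every inner vertex has at least two children. -/
inductive Tree : Type where
  | leaf : Tree
  | node : (κ : ℕ) → 2 ≤ κ → (Fin κ → Tree) → Tree

/-- Reindex a label function `θ` to the subtree rooted at the vertex with address `v`. -/
def shift (θ : List ℕ → ℕ → ℝ) (v : List ℕ) : List ℕ → ℕ → ℝ :=
  fun w j => θ (v ++ w) j

/-- The number of outgoing edges of the vertex with address `v` (`0` for leaves and
invalid addresses). -/
def degree : Tree → List ℕ → ℕ
  | .leaf, _ => 0
  | .node κ _ _, [] => κ
  | .node κ _ c, a :: v => if h : a < κ then degree (c ⟨a, h⟩) v else 0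

/-- The subtree rooted at the vertex with address `v`. -/
def subtreeAt : Tree → List ℕ → Tree
  | t, [] => t
  | .leaf, _ :: _ => .leaf
  | .node κ _ c, a :: v => if h : a < κ then subtreeAt (c ⟨a, h⟩) v else .leaf

/-- `v` is the address of a vertex of the tree. -/
def isValid : Tree → List ℕ → Prop
  | _, [] => True
  | .leaf, _ :: _ => False
  | .node κ _ c, a :: v => ∃ h : a < κ, isValid (c ⟨a, h⟩) v

/-- The list of all root-to-leaf paths of the tree, encoded as lists of edge indices. -/
def leaves : Tree → List (List ℕ)
  | .leaf => [[]]
  | .node κ _ c => (List.finRange κ).flatMap fun a => (leaves (c a)).map (a.val :: ·)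

/-- The atomic probability of a root-to-leaf path: the product of the labels of the
edges along the path. -/
def prob (θ : List ℕ → ℕ → ℝ) : Tree → List ℕ → ℝ
  | .leaf, [] => 1
  | .leaf, _ :: _ => 0
  | .node _ _ _, [] => 0
  | .node κ _ c, a :: x =>
      if h : a < κ then θ [] a * prob (shift θ [a]) (c ⟨a, h⟩) x else 0

/-- `θ` is an admissible labelling: at every inner vertex all labels lie in `(0,1)` and
sum to one. -/
def Admissible (θ : List ℕ → ℕ → ℝ) : Tree → Prop
  | .leaf => True
  | .node κ _ c =>
      (∀ j : Fin κ, θ [] (j : ℕ) ∈ Set.Ioo (0 : ℝ) 1) ∧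
      (∑ j : Fin κ, θ [] (j : ℕ)) = 1 ∧
      ∀ a : Fin κ, Admissible (shift θ [(a : ℕ)]) (c a)

/-- The product of the labels along the all-downward path from the root of the tree to a
leaf, where the downward edge of a vertex with `κ` outgoing edges is the edge with
index `κ - 1`. -/
def N (θ : List ℕ → ℕ → ℝ) : Tree → ℝ
  | .leaf => 1
  | .node κ h c => θ [] (κ - 1) * N (shift θ [κ - 1]) (c ⟨κ - 1, by omega⟩)

/-- `N` of the vertex with address `v`. -/
def Nvert (θ : List ℕ → ℕ → ℝ) (T : Tree) (v : List ℕ) : ℝ :=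
  N (shift θ v) (subtreeAt T v)


/-- The product `∏_i ∏_{j<κ_i-1} (θ_{ij} N_{ij}(θ)/N_i(θ))^{α_{ij}(x)}` along the
path `x`. -/
noncomputable def expFactorProd (θ : List ℕ → ℕ → ℝ) : Tree → List ℕ → ℝ
  | .leaf, _ => 1
  | .node _ _ _, [] => 1
  | .node κ hκ c, a :: x =>
      if h : a < κ then
        (if a = κ - 1 then 1
          else θ [] a * N (shift θ [a]) (c ⟨a, h⟩) / N θ (.node κ hκ c)) *
          expFactorProd (shift θ [a]) (c ⟨a, h⟩) x
      else 1

/-- The sum `Σ_i Σ_{j<κ_i-1} η_{ij}(θ) α_{ij}(x)` of the natural parameters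
`η_{ij}(θ) = log(θ_{ij} N_{ij}(θ)/N_i(θ))` along the path `x`. -/
noncomputable def etaSum (θ : List ℕ → ℕ → ℝ) : Tree → List ℕ → ℝ
  | .leaf, _ => 0
  | .node _ _ _, [] => 0
  | .node κ hκ c, a :: x =>
      if h : a < κ then
        (if a = κ - 1 then 0
          else Real.log (θ [] a * N (shift θ [a]) (c ⟨a, h⟩) / N θ (.node κ hκ c))) +
          etaSum (shift θ [a]) (c ⟨a, h⟩) x
      else 0

lemma N_pos : ∀ (T : Tree) (θ : List ℕ → ℕ → ℝ), Admissible θ T → 0 < N θ T := by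
  intro T
  induction T with
  | leaf => intro θ _; simp [N]
  | node κ hκ c ih =>
    intro θ hθ
    rw [N]
    have h1 : κ - 1 < κ := by omega
    exact mul_pos (hθ.1 ⟨κ - 1, h1⟩).1 (ih ⟨κ - 1, h1⟩ _ (hθ.2.2 ⟨κ - 1, h1⟩))

/-- Proposition 1, exponential form. For every admissible `θ` and
every root-to-leaf path `x`,
`p_θ(x) = N_1(θ) · ∏_i ∏_{j<κ_i-1} (θ_{ij} N_{ij}(θ)/N_i(θ))^{α_{ij}(x)}`, and
equivalently `p_θ(x) = exp(Σ_{ij} η_{ij}(θ) α_{ij}(x) - ψ(θ))` with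
`η_{ij}(θ) = log(θ_{ij} N_{ij}(θ)/N_i(θ))` and cumulant-generating function
`ψ(θ) = -log N_1(θ)`; thus the tree represents an exponential family with sufficient
statistic the edge indicators, natural parameters `η_{ij}`, and
cumulant-generating function `ψ`. -/
theorem exponential_form (T : Tree) (θ : List ℕ → ℕ → ℝ) (hθ : Admissible θ T) :
    ∀ x ∈ leaves T,
      prob θ T x = N θ T * expFactorProd θ T x ∧
      prob θ T x = Real.exp (etaSum θ T x - (- Real.log (N θ T))) := by
  induction T generalizing θ with
  | leaf =>
    intro x hx
    simp only [leaves, List.mem_singleton] at hx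
    subst hx
    simp [prob, N, expFactorProd, etaSum]
  | node κ hκ c ih =>
    intro x hx
    simp only [leaves, List.mem_flatMap, List.mem_map, List.mem_finRange, true_and] at hx
    obtain ⟨a, y, hy, rfl⟩ := hx
    have ha : (a : ℕ) < κ := a.isLt
    have hadm : Admissible (shift θ [(a : ℕ)]) (c a) := hθ.2.2 a
    have hIH := ih a (shift θ [(a : ℕ)]) hadm y hy
    have hNs : 0 < N (shift θ [(a : ℕ)]) (c a) := N_pos _ _ hadm
    have hNn : 0 < N θ (.node κ hκ c) := N_pos _ _ hθ
    have hθa : 0 < θ [] (a : ℕ) := (hθ.1 a).1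
    have hca : c ⟨(a : ℕ), ha⟩ = c a := by congr
    have hprob : prob θ (.node κ hκ c) ((a : ℕ) :: y)
        = θ [] (a : ℕ) * prob (shift θ [(a : ℕ)]) (c a) y := by
      rw [prob]; rw [dif_pos ha, hca]
    constructor
    · rw [hprob, expFactorProd, dif_pos ha, hca]
      by_cases hd : (a : ℕ) = κ - 1
      · rw [if_pos hd]
        have hNnode : N θ (.node κ hκ c) = θ [] (κ - 1) *
            N (shift θ [κ - 1]) (c ⟨κ - 1, by omega⟩) := rfl
        have heq : (⟨κ - 1, by omega⟩ : Fin κ) = a := by ext; simp [hd]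
        rw [hNnode, heq, ← hd, hIH.1]
        ring
      · rw [if_neg hd, hIH.1]
        field_simp
    · rw [hprob, etaSum, dif_pos ha, hca]
      by_cases hd : (a : ℕ) = κ - 1
      · rw [if_pos hd]
        have hNnode : N θ (.node κ hκ c) = θ [] (κ - 1) *
            N (shift θ [κ - 1]) (c ⟨κ - 1, by omega⟩) := rfl
        have heq : (⟨κ - 1, by omega⟩ : Fin κ) = a := by ext; simp [hd]
        rw [hIH.2, Real.exp_sub, Real.exp_sub, hNnode, heq, ← hd]
        rw [Real.exp_neg, Real.exp_neg, Real.exp_log hNs, Real.exp_log]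
        · rw [zero_add]
          field_simp
        · rw [hd] at hNs ⊢
          exact mul_pos (hθ.1 ⟨κ - 1, by omega⟩).1 (by convert hNs using 3)
      · rw [if_neg hd, hIH.2]
        rw [Real.exp_sub, Real.exp_sub, Real.exp_add]
        rw [Real.exp_neg, Real.exp_neg, Real.exp_log hNs, Real.exp_log hNn]
        rw [Real.exp_log (by positivity)]
        field_simp

end StagedTrees
end

section
/- (Proposition 3, first claim) Every balanced staged tree is regular: if for all inner vertices v_i, v_s in the same stage (with κ := κ_i = κ_s) and all j = 1,…,κ the polynomial identity t_{ij} t_{sκ} = t_{iκ} t_{sj} holds, then for all such i, s, j the monomial identity N_{ij} N_{sκ} = N_{sj} N_{iκ} holds. -/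
namespace StagedTrees

/-- The interpolating polynomial of the vertex with (absolute) address `v`: the formal
sum, over all `v`-to-leaf paths `r`, of the product of the edge labels along `r`.  The
label of the `j`-th edge out of the vertex with address `v` is the indeterminate
`θ_{(rep v, j)}`, so that same-stage vertices (those with the same image under the
stage-representative map `rep`) share their edge labels. -/
noncomputable def interpS (rep : List ℕ → List ℕ) :
    Tree → List ℕ → MvPolynomial (List ℕ × ℕ) ℝ
  | .leaf, _ => 1
  | .node κ _ c, v =>
      ∑ a : Fin κ, MvPolynomial.X (rep v, (a : ℕ)) * interpS rep (c a) (v ++ [(a : ℕ)])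

/-- The monomial given by the product of the labels along the all-downward path from
the vertex with address `v` to a leaf. -/
noncomputable def NMono (rep : List ℕ → List ℕ) :
    Tree → List ℕ → MvPolynomial (List ℕ × ℕ) ℝ
  | .leaf, _ => 1
  | .node κ h c, v =>
      MvPolynomial.X (rep v, κ - 1) * NMono rep (c ⟨κ - 1, by omega⟩) (v ++ [κ - 1])

/-- `t_{ij}`: the interpolating polynomial of the head `v_{ij}` of the `j`-th edge out
of the vertex with address `v`. -/
noncomputable def tPoly (T : Tree) (rep : List ℕ → List ℕ) (v : List ℕ) (j : ℕ) :
    MvPolynomial (List ℕ × ℕ) ℝ :=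
  interpS rep (subtreeAt T (v ++ [j])) (v ++ [j])

/-- `N_{ij}`: the downward monomial of the head `v_{ij}` of the `j`-th edge out of the
vertex with address `v`. -/
noncomputable def NPoly (T : Tree) (rep : List ℕ → List ℕ) (v : List ℕ) (j : ℕ) :
    MvPolynomial (List ℕ × ℕ) ℝ :=
  NMono rep (subtreeAt T (v ++ [j])) (v ++ [j])

lemma subtreeAt_append :
    ∀ (v : List ℕ) (T : Tree), isValid T v → ∀ w,
      subtreeAt T (v ++ w) = subtreeAt (subtreeAt T v) w
  | [], T, _, w => by cases T <;> rfl
  | a :: v, .leaf, hv, w => absurd hv (by simp [isValid])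
  | a :: v, .node κ h c, hv, w => by
    obtain ⟨ha, hv'⟩ := hv
    simpa [subtreeAt, ha] using subtreeAt_append v (c ⟨a, ha⟩) hv' w

lemma degree_append :
    ∀ (v : List ℕ) (T : Tree), isValid T v → ∀ w,
      degree T (v ++ w) = degree (subtreeAt T v) w
  | [], T, _, w => by cases T <;> rfl
  | a :: v, .leaf, hv, w => absurd hv (by simp [isValid])
  | a :: v, .node κ h c, hv, w => by
    obtain ⟨ha, hv'⟩ := hv
    simpa [degree, subtreeAt, ha] using degree_append v (c ⟨a, ha⟩) hv' w

lemma isValid_append :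
    ∀ (v : List ℕ) (T : Tree), isValid T v → ∀ w,
      isValid (subtreeAt T v) w → isValid T (v ++ w)
  | [], T, _, w, hw => by cases T <;> exact hw
  | a :: v, .leaf, hv, w, _ => absurd hv (by simp [isValid])
  | a :: v, .node κ h c, hv, w, hw => by
    obtain ⟨ha, hv'⟩ := hv
    refine ⟨ha, isValid_append v (c ⟨a, ha⟩) hv' w ?_⟩
    simpa [subtreeAt, ha] using hw

lemma isValid_nil (t : Tree) : isValid t [] := by cases t <;> trivial

open MvPolynomial Classical in
/-- The specialization sending every variable that is not a "downward" edge label to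
zero, and fixing the downward labels. -/
noncomputable def downSpec (T : Tree) (rep : List ℕ → List ℕ) :
    MvPolynomial (List ℕ × ℕ) ℝ →ₐ[ℝ] MvPolynomial (List ℕ × ℕ) ℝ :=
  aeval fun p =>
    if ∃ u, isValid T u ∧ rep u = p.1 ∧ degree T u = p.2 + 1 then X p else 0

open MvPolynomial in
lemma downSpec_interp (T : Tree) (rep : List ℕ → List ℕ)
    (hdeg : ∀ u w : List ℕ, isValid T u → isValid T w → rep u = rep w →
      degree T u = degree T w) :
    ∀ (t : Tree) (v : List ℕ), isValid T v → subtreeAt T v = t →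
      downSpec T rep (interpS rep t v) = NMono rep t v := by
  intro t
  induction t with
  | leaf => intro v _ _; simp [interpS, NMono]
  | node κ h c ih =>
    intro v hv ht
    have hκ : degree T v = κ := by
      have := degree_append v T hv []
      simpa [ht, degree] using this
    have hchild : ∀ a : Fin κ, subtreeAt T (v ++ [(a : ℕ)]) = c a := by
      intro a
      rw [subtreeAt_append v T hv [(a : ℕ)], ht]
      simp [subtreeAt, a.isLt]
    have hvalid : ∀ a : Fin κ, isValid T (v ++ [(a : ℕ)]) := by
      intro a
      refine isValid_append v T hv [(a : ℕ)] ?_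
      rw [ht]
      exact ⟨a.isLt, isValid_nil _⟩
    have hX : ∀ a : Fin κ, downSpec T rep (X (rep v, (a : ℕ))) =
        if (a : ℕ) = κ - 1 then X (rep v, (a : ℕ)) else 0 := by
      intro a
      simp only [downSpec, aeval_X]
      by_cases hcase : (a : ℕ) = κ - 1
      · rw [if_pos hcase, if_pos ⟨v, hv, rfl, by omega⟩]
      · rw [if_neg hcase, if_neg]
        rintro ⟨u, hu, hru, hdu⟩
        have := hdeg u v hu hv hru
        omega
    have key : downSpec T rep (interpS rep (.node κ h c) v) =
        ∑ a : Fin κ, (if (a : ℕ) = κ - 1 then X ((rep v, (a : ℕ)) : List ℕ × ℕ) else 0) *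
          downSpec T rep (interpS rep (c a) (v ++ [(a : ℕ)])) := by
      rw [show interpS rep (.node κ h c) v =
        ∑ a : Fin κ, X (rep v, (a : ℕ)) * interpS rep (c a) (v ++ [(a : ℕ)]) from rfl]
      rw [map_sum]
      exact Finset.sum_congr rfl fun a _ => by rw [map_mul, hX a]
    rw [key, Finset.sum_eq_single (⟨κ - 1, by omega⟩ : Fin κ)]
    · rw [if_pos rfl, ih _ _ (hvalid _) (hchild _)]
      rfl
    · intro b _ hb
      rw [if_neg, zero_mul]
      intro hbe
      exact hb (Fin.ext hbe)
    · intro habs; exact absurd (Finset.mem_univ _) habs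

/-- Proposition 3, first claim. Every balanced staged tree is
regular: if for all same-stage inner vertices `v_i, v_s` (which have the same number
`κ` of outgoing edges) and all edges `j` the polynomial identity
`t_{ij} t_{sκ} = t_{iκ} t_{sj}` holds, then for all such `i, s, j` the monomial
identity `N_{ij} N_{sκ} = N_{sj} N_{iκ}` holds. -/
theorem balanced_implies_regular (T : Tree) (rep : List ℕ → List ℕ)
    (hdeg : ∀ u w : List ℕ, isValid T u → isValid T w → rep u = rep w →
      degree T u = degree T w)
    (hbal : ∀ u w : List ℕ, isValid T u → isValid T w → 0 < degree T u →
      rep u = rep w → ∀ j < degree T u,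
        tPoly T rep u j * tPoly T rep w (degree T u - 1) =
          tPoly T rep u (degree T u - 1) * tPoly T rep w j) :
    ∀ u w : List ℕ, isValid T u → isValid T w → 0 < degree T u →
      rep u = rep w → ∀ j < degree T u,
        NPoly T rep u j * NPoly T rep w (degree T u - 1) =
          NPoly T rep w j * NPoly T rep u (degree T u - 1) := by
  have hedge : ∀ (v : List ℕ) (j : ℕ), isValid T v → j < degree T v →
      isValid T (v ++ [j]) := by
    intro v j hv hj
    refine isValid_append v T hv [j] ?_
    have hd : degree T v = degree (subtreeAt T v) [] := by
      simpa using degree_append v T hv []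
    cases htv : subtreeAt T v with
    | leaf => rw [hd, htv] at hj; simp [degree] at hj
    | node κ h c =>
      rw [hd, htv] at hj
      exact ⟨hj, isValid_nil _⟩
  intro u w hu hw hpos hr j hj
  have hdw : degree T u = degree T w := hdeg u w hu hw hr
  have hNu : ∀ j' < degree T u, downSpec T rep (tPoly T rep u j') = NPoly T rep u j' :=
    fun j' hj' => downSpec_interp T rep hdeg _ _ (hedge u j' hu hj') rfl
  have hNw : ∀ j' < degree T u, downSpec T rep (tPoly T rep w j') = NPoly T rep w j' :=
    fun j' hj' => downSpec_interp T rep hdeg _ _ (hedge w j' hw (hdw ▸ hj')) rfl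
  have h1 := congrArg (downSpec T rep) (hbal u w hu hw hpos hr j hj)
  rw [map_mul, map_mul, hNu j hj, hNu _ (by omega), hNw j hj, hNw _ (by omega)] at h1
  rw [h1, mul_comm]

end StagedTrees
end
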